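/- Let n ≥ 0 and let 0 = t₀ < t₁ < ⋯ < t_{2n+1} be real numbers. Define μ(t) = 8 · Σ_{k=0}^∞ (e^{−(2k+1)²π² t}/((2k+1)²π²)) · Σ_{j=0}^{2n+1} (−1)^{j+1} e^{(2k+1)²π² t_j} for t ≥ t_{2n+1}. Then μ is strictly monotone decreasing on [t_{2n+1}, ∞), μ(t) → 0 as t → ∞, and consequently for every m with 0 < m < μ(t_{2n+1}) there exists a unique t_{2n+2} > t_{2n+1} with μ(t_{2n+2}) = m. -/

import Mathlib

/-!
Writing `T = t_{2n+1}`, the mass is a general Dirichlet series `μ(s) = ∑ c_k e^{-λ_k s}` with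
`λ_k = (2k+1)²π²` and `c_k = 8 a_k / λ_k`, where `a_k = ∑_j (-1)^{j+1} e^{λ_k t_j}` is an alternating
sum of increasing values. Grouping it in consecutive pairs gives `a_k > 0`, and telescoping gives
`a_k ≤ e^{λ_k T}`, so the terms at `s = T` are dominated by the summable `8 / λ_k`. For `s ≥ T` every
term decreases strictly in `s`, the series converges uniformly (so `μ` is continuous), and
`μ(s) ≤ e^{-π²(s - T)} μ(T) → 0`. The intermediate value theorem and injectivity finish the proof.
-/

/-- The total mass for `t ≥ t_{2n+1}` (boundary value switched off at `t_{2n+1}`):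
`μ(t) = 8 ∑_{k=0}^∞ (e^{-(2k+1)²π² t}/((2k+1)²π²)) ∑_{j=0}^{2n+1} (-1)^{j+1} e^{(2k+1)²π² t_j}`. -/
noncomputable def muOff (n : ℕ) (t : ℕ → ℝ) (s : ℝ) : ℝ :=
  8 * ∑' k : ℕ, (Real.exp (-((2 * (k : ℝ) + 1) ^ 2 * Real.pi ^ 2) * s) /
      ((2 * (k : ℝ) + 1) ^ 2 * Real.pi ^ 2)) *
    ∑ j ∈ Finset.range (2 * n + 2), (-1 : ℝ) ^ (j + 1) *
      Real.exp (((2 * (k : ℝ) + 1) ^ 2 * Real.pi ^ 2) * t j)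

open Real Set Filter Finset Topology

noncomputable def genDirichletSeries (c l : ℕ → ℝ) (s : ℝ) : ℝ :=
  ∑' k, c k * exp (-l k * s)

section genDirichletSeries

variable {c l : ℕ → ℝ} {T : ℝ}

lemma mul_exp_neg_mul_le_of_le {a b s : ℝ} (ha : 0 ≤ a) (hb : 0 ≤ b) (hs : T ≤ s) :
    a * exp (-b * s) ≤ a * exp (-b * T) :=
  mul_le_mul_of_nonneg_left (exp_le_exp.2 (mul_le_mul_of_nonpos_left hs (neg_nonpos.2 hb))) ha

lemma summable_mul_exp_of_le (hc : ∀ k, 0 ≤ c k) (hl : ∀ k, 0 ≤ l k)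
    (hT : Summable fun k ↦ c k * exp (-l k * T)) {s : ℝ} (hs : T ≤ s) :
    Summable fun k ↦ c k * exp (-l k * s) :=
  hT.of_nonneg_of_le (fun k ↦ mul_nonneg (hc k) (exp_pos _).le)
    fun k ↦ mul_exp_neg_mul_le_of_le (hc k) (hl k) hs

lemma genDirichletSeries_nonneg (hc : ∀ k, 0 ≤ c k) (s : ℝ) : 0 ≤ genDirichletSeries c l s :=
  tsum_nonneg fun k ↦ mul_nonneg (hc k) (exp_pos _).le

lemma genDirichletSeries_strictAntiOn (hc : ∀ k, 0 ≤ c k) (hl : ∀ k, 0 < l k) {i : ℕ}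
    (hci : 0 < c i) (hT : Summable fun k ↦ c k * exp (-l k * T)) :
    StrictAntiOn (genDirichletSeries c l) (Ici T) := by
  intro x hx y _ hxy
  refine Summable.tsum_lt_tsum_of_nonneg (i := i) (fun k ↦ mul_nonneg (hc k) (exp_pos _).le)
    (fun k ↦ mul_exp_neg_mul_le_of_le (hc k) (hl k).le hxy.le) ?_
    (summable_mul_exp_of_le hc (fun k ↦ (hl k).le) hT hx)
  exact mul_lt_mul_of_pos_left (exp_lt_exp.2 (mul_lt_mul_of_neg_left hxy (neg_neg_of_pos (hl i))))
    hci

lemma genDirichletSeries_continuousOn (hc : ∀ k, 0 ≤ c k) (hl : ∀ k, 0 ≤ l k)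
    (hT : Summable fun k ↦ c k * exp (-l k * T)) :
    ContinuousOn (genDirichletSeries c l) (Ici T) :=
  continuousOn_tsum (fun _ ↦ by fun_prop) hT fun k s hs ↦ by
    rw [Real.norm_of_nonneg (mul_nonneg (hc k) (exp_pos _).le)]
    exact mul_exp_neg_mul_le_of_le (hc k) (hl k) hs

lemma genDirichletSeries_le_exp_mul {l₀ : ℝ} (hc : ∀ k, 0 ≤ c k) (hl : ∀ k, l₀ ≤ l k)
    (hT : Summable fun k ↦ c k * exp (-l k * T)) {s : ℝ} (hs : T ≤ s) :
    genDirichletSeries c l s ≤ exp (-l₀ * (s - T)) * genDirichletSeries c l T := by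
  have hterm (k : ℕ) :
      c k * exp (-l k * s) ≤ exp (-l₀ * (s - T)) * (c k * exp (-l k * T)) := by
    have hexp : exp (-l k * (s - T)) ≤ exp (-l₀ * (s - T)) :=
      exp_le_exp.2 (mul_le_mul_of_nonneg_right (neg_le_neg (hl k)) (sub_nonneg.2 hs))
    calc c k * exp (-l k * s) = exp (-l k * (s - T)) * (c k * exp (-l k * T)) := by
          rw [mul_left_comm, ← exp_add]; ring_nf
      _ ≤ exp (-l₀ * (s - T)) * (c k * exp (-l k * T)) :=
          mul_le_mul_of_nonneg_right hexp (mul_nonneg (hc k) (exp_pos _).le)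
  unfold genDirichletSeries
  rw [← tsum_mul_left]
  exact Summable.tsum_le_tsum hterm
    ((hT.mul_left _).of_nonneg_of_le (fun k ↦ mul_nonneg (hc k) (exp_pos _).le) hterm)
    (hT.mul_left _)

lemma genDirichletSeries_tendsto_zero {l₀ : ℝ} (hc : ∀ k, 0 ≤ c k) (hl₀ : 0 < l₀)
    (hl : ∀ k, l₀ ≤ l k) (hT : Summable fun k ↦ c k * exp (-l k * T)) :
    Tendsto (genDirichletSeries c l) atTop (𝓝 0) := by
  have hdecay : Tendsto (fun s ↦ exp (-l₀ * (s - T)) * genDirichletSeries c l T) atTop (𝓝 0) := by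
    have hexp : Tendsto (fun s ↦ -l₀ * (s - T)) atTop atBot :=
      (tendsto_atTop_add_const_right _ _ tendsto_id).const_mul_atTop_of_neg (neg_neg_of_pos hl₀)
    simpa using (tendsto_exp_atBot.comp hexp).mul_const (genDirichletSeries c l T)
  refine squeeze_zero' (.of_forall (genDirichletSeries_nonneg hc)) ?_ hdecay
  filter_upwards [eventually_ge_atTop T] with s hs
  exact genDirichletSeries_le_exp_mul hc hl hT hs

end genDirichletSeries

lemma existsUnique_eq_of_strictAntiOn_Ici {f : ℝ → ℝ} {T L m : ℝ} (hanti : StrictAntiOn f (Ici T))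
    (hcont : ContinuousOn f (Ici T)) (hlim : Tendsto f atTop (𝓝 L)) (hLm : L < m) (hmT : m < f T) :
    ∃! s, T < s ∧ f s = m := by
  obtain ⟨S, hSm, hTS⟩ : ∃ S, f S < m ∧ T ≤ S :=
    ((hlim.eventually (gt_mem_nhds hLm)).and (eventually_ge_atTop T)).exists
  obtain ⟨s, hs, hfs⟩ :=
    intermediate_value_Icc' hTS (hcont.mono Icc_subset_Ici_self) ⟨hSm.le, hmT.le⟩
  have hTs : T < s := hs.1.lt_of_ne (by rintro rfl; exact hmT.ne' hfs)
  refine ⟨s, ⟨hTs, hfs⟩, fun y ⟨hTy, hfy⟩ ↦ ?_⟩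
  exact hanti.injOn (mem_Ici.2 hTy.le) (mem_Ici.2 hTs.le) (hfy.trans hfs.symm)

def altSum (g : ℕ → ℝ) (n : ℕ) : ℝ := ∑ j ∈ range (2 * n + 2), (-1 : ℝ) ^ (j + 1) * g j

section altSum

variable {g : ℕ → ℝ}

lemma altSum_succ (g : ℕ → ℝ) (n : ℕ) :
    altSum g (n + 1) = altSum g n + (g (2 * (n + 1) + 1) - g (2 * (n + 1))) := by
  rw [altSum, altSum, show 2 * (n + 1) + 2 = 2 * n + 2 + 1 + 1 by ring, sum_range_succ,
    sum_range_succ]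
  norm_num [pow_succ, pow_mul]
  ring_nf

lemma altSum_pos {n : ℕ} (hg : ∀ i, i < 2 * n + 1 → g i < g (i + 1)) : 0 < altSum g n := by
  induction n with
  | zero => simpa [altSum, sum_range_succ] using hg 0 (by omega)
  | succ n ih =>
    rw [altSum_succ]
    linarith [ih fun i hi ↦ hg i (by omega), hg (2 * (n + 1)) (by omega)]

lemma altSum_le {n : ℕ} (hg : ∀ i, i < 2 * n + 1 → g i ≤ g (i + 1)) :
    altSum g n ≤ g (2 * n + 1) - g 0 := by
  induction n with
  | zero => norm_num [altSum, sum_range_succ]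
  | succ n ih =>
    rw [altSum_succ]
    have hgap : g (2 * n + 1) ≤ g (2 * (n + 1)) := hg _ (by omega)
    linarith [ih fun i hi ↦ hg i (by omega)]

end altSum

/-- The decay rate `λ_{2k+1}²` of the `(2k+1)`-st Fourier mode. -/
noncomputable def oddEigenvalue (k : ℕ) : ℝ := (2 * (k : ℝ) + 1) ^ 2 * π ^ 2

lemma pi_sq_le_oddEigenvalue (k : ℕ) : π ^ 2 ≤ oddEigenvalue k :=
  le_mul_of_one_le_left (by positivity) (one_le_pow₀ (by linarith [k.cast_nonneg (α := ℝ)]))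

lemma oddEigenvalue_pos (k : ℕ) : 0 < oddEigenvalue k :=
  (by positivity : (0 : ℝ) < π ^ 2).trans_le (pi_sq_le_oddEigenvalue k)

lemma summable_inv_oddEigenvalue : Summable fun k ↦ (oddEigenvalue k)⁻¹ := by
  have hsq : Summable fun k : ℕ ↦ 1 / ((k + 1 : ℕ) : ℝ) ^ 2 :=
    (summable_nat_add_iff 1).2 (summable_one_div_nat_pow.2 one_lt_two)
  refine (hsq.mul_left (π ^ 2)⁻¹).of_nonneg_of_le (fun k ↦ inv_nonneg.2 (oddEigenvalue_pos k).le)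
    fun k ↦ ?_
  rw [oddEigenvalue, mul_inv, mul_comm, one_div]
  gcongr
  push_cast
  linarith [k.cast_nonneg (α := ℝ)]

noncomputable def muCoeff (n : ℕ) (t : ℕ → ℝ) (k : ℕ) : ℝ :=
  8 * altSum (fun j ↦ exp (oddEigenvalue k * t j)) n / oddEigenvalue k

lemma muOff_eq_genDirichletSeries (n : ℕ) (t : ℕ → ℝ) :
    muOff n t = genDirichletSeries (muCoeff n t) oddEigenvalue := by
  funext s
  rw [muOff, genDirichletSeries, ← tsum_mul_left]
  congr 1 with k
  rw [muCoeff, altSum, oddEigenvalue]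
  ring

section muCoeff

variable {n : ℕ} {t : ℕ → ℝ} (hmono : ∀ i, i < 2 * n + 1 → t i < t (i + 1))
include hmono

lemma muCoeff_pos (k : ℕ) : 0 < muCoeff n t k := by
  have := altSum_pos (g := fun j ↦ exp (oddEigenvalue k * t j))
    fun i hi ↦ exp_lt_exp.2 (mul_lt_mul_of_pos_left (hmono i hi) (oddEigenvalue_pos k))
  exact div_pos (by positivity) (oddEigenvalue_pos k)

lemma muCoeff_mul_exp_le (k : ℕ) :
    muCoeff n t k * exp (-oddEigenvalue k * t (2 * n + 1)) ≤ 8 * (oddEigenvalue k)⁻¹ := by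
  have hsum := altSum_le (g := fun j ↦ exp (oddEigenvalue k * t j))
    fun i hi ↦ exp_le_exp.2 (mul_le_mul_of_nonneg_left (hmono i hi).le (oddEigenvalue_pos k).le)
  set A := altSum (fun j ↦ exp (oddEigenvalue k * t j)) n
  have hA : A * exp (-oddEigenvalue k * t (2 * n + 1)) ≤ 1 :=
    calc A * exp (-oddEigenvalue k * t (2 * n + 1))
        ≤ exp (oddEigenvalue k * t (2 * n + 1)) * exp (-oddEigenvalue k * t (2 * n + 1)) :=
          mul_le_mul_of_nonneg_right (hsum.trans (sub_le_self _ (exp_pos _).le)) (exp_pos _).le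
      _ = 1 := by rw [← exp_add, neg_mul, add_neg_cancel, exp_zero]
  calc muCoeff n t k * exp (-oddEigenvalue k * t (2 * n + 1))
      = 8 * (A * exp (-oddEigenvalue k * t (2 * n + 1))) / oddEigenvalue k := by
        rw [muCoeff]; ring
    _ ≤ 8 * 1 / oddEigenvalue k := by have := oddEigenvalue_pos k; gcongr
    _ = 8 * (oddEigenvalue k)⁻¹ := by ring

lemma summable_muCoeff_mul_exp :
    Summable fun k ↦ muCoeff n t k * exp (-oddEigenvalue k * t (2 * n + 1)) :=
  (summable_inv_oddEigenvalue.mul_left 8).of_nonneg_of_le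
    (fun k ↦ mul_nonneg (muCoeff_pos hmono k).le (exp_pos _).le) (muCoeff_mul_exp_le hmono)

end muCoeff

theorem muOff_strictAnti_tendsto_existsUnique_general (n : ℕ)
    (t : ℕ → ℝ) (hmono : ∀ i, i < 2 * n + 1 → t i < t (i + 1)) :
    StrictAntiOn (muOff n t) (Set.Ici (t (2 * n + 1))) ∧
    Filter.Tendsto (muOff n t) Filter.atTop (nhds 0) ∧
    ∀ m : ℝ, 0 < m → m < muOff n t (t (2 * n + 1)) →
      ∃! s : ℝ, t (2 * n + 1) < s ∧ muOff n t s = m := by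
  rw [muOff_eq_genDirichletSeries]
  have hc : ∀ k, 0 ≤ muCoeff n t k := fun k ↦ (muCoeff_pos hmono k).le
  have hT := summable_muCoeff_mul_exp hmono
  have hanti := genDirichletSeries_strictAntiOn hc oddEigenvalue_pos (muCoeff_pos hmono 0) hT
  have hlim := genDirichletSeries_tendsto_zero hc (by positivity) pi_sq_le_oddEigenvalue hT
  have hcont := genDirichletSeries_continuousOn hc (fun k ↦ (oddEigenvalue_pos k).le) hT
  exact ⟨hanti, hlim, fun m hm hmT ↦ existsUnique_eq_of_strictAntiOn_Ici hanti hcont hlim hm hmT⟩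

/-- For switching times `0 = t₀ < t₁ < ⋯ < t_{2n+1}` the mass `μ` is strictly decreasing on
`[t_{2n+1}, ∞)`, tends to `0` at infinity, and hence hits every level `m` with
`0 < m < μ(t_{2n+1})` at a unique time `t_{2n+2} > t_{2n+1}`. -/
theorem muOff_strictAnti_tendsto_existsUnique (n : ℕ)
    (t : ℕ → ℝ) (ht0 : t 0 = 0) (hmono : ∀ i, i < 2 * n + 1 → t i < t (i + 1)) :
    StrictAntiOn (muOff n t) (Set.Ici (t (2 * n + 1))) ∧
    Filter.Tendsto (muOff n t) Filter.atTop (nhds 0) ∧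
    ∀ m : ℝ, 0 < m → m < muOff n t (t (2 * n + 1)) →
      ∃! s : ℝ, t (2 * n + 1) < s ∧ muOff n t s = m :=
  muOff_strictAnti_tendsto_existsUnique_general n t hmono
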